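/- For every integer n ≥ 1, ∑_{j=1}^{n} H_{j,2}^2/j^2 = (1/3)H_{n,2}^3 + ∑_{j=1}^{n} H_{j,2}/j^4 − (1/3)H_{n,6}. Moreover, ∑_{j=1}^{n} H_{j,2}^2/j^2 → ζ(3)² + 19π⁶/22680 as n → ∞. -/

import Mathlib

/-!
Telescoping `H_{j,2}^3 - H_{j-1,2}^3` gives the finite identity, and it reduces the limit to
`∑_j H_{j,2}/j^4 → ζ(4,2) + ζ(6)` with the double zeta value `ζ(4,2) = ∑_{t>s≥1} 1/(t^4 s^2)`.
Multiplying out `ζ(3)^2` and `ζ(2)ζ(4)` in two ways gives four linear relations between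
`ζ(5,1), ζ(4,2), ζ(3,3), ζ(2,4)`: as Cauchy products expanded by Euler's partial fractions
(the shuffle relations), and as limits of `H_{n,a} H_{n,b}` (the stuffle relations).
Solving them yields `ζ(4,2) = ζ(3)^2 - 4/3 ζ(6)`.
-/

open Finset Filter Real Topology

/-- Generalized harmonic number `H (n, m) = ∑_{i=1}^{n} 1/i^m` as a real number. -/
noncomputable def H (n m : ℕ) : ℝ := ∑ i ∈ Finset.Icc 1 n, (1 : ℝ) / (i : ℝ) ^ m

/-- Apéry's constant `ζ(3) = ∑_{k=1}^{∞} 1/k³`. -/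
noncomputable def zeta3 : ℝ := ∑' k : ℕ, 1 / ((k : ℝ) + 1) ^ 3

theorem Finset.sum_Icc_one_eq_sum_range {M : Type*} [AddCommMonoid M] (f : ℕ → M) (n : ℕ) :
    ∑ i ∈ Icc 1 n, f i = ∑ i ∈ range n, f (i + 1) := by
  rw [← Ico_add_one_right_eq_Icc, sum_Ico_eq_sum_range]
  simp [add_comm]

theorem HasSum.tendsto_sum_Icc_one {M : Type*} [AddCommMonoid M] [TopologicalSpace M]
    {f : ℕ → M} {s : M} (hf : HasSum f s) (h0 : f 0 = 0) :
    Tendsto (fun n ↦ ∑ i ∈ Icc 1 n, f i) atTop (𝓝 s) := by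
  have h : ∀ n, ∑ i ∈ range (n + 1), f i = ∑ i ∈ Icc 1 n, f i := fun n ↦ by
    rw [sum_range_succ', h0, add_zero, sum_Icc_one_eq_sum_range]
  simpa only [Function.comp_def, h] using hf.tendsto_sum_nat.comp (tendsto_add_atTop_nat 1)

theorem HasSum.mul_antidiagonal_of_nonneg {f g : ℕ → ℝ} {s t : ℝ} (hf : HasSum f s)
    (hg : HasSum g t) (hf₀ : 0 ≤ f) (hg₀ : 0 ≤ g) :
    HasSum (fun n ↦ ∑ kl ∈ antidiagonal n, f kl.1 * g kl.2) (s * t) := by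
  have hfg := hf.summable.mul_of_nonneg hg.summable hf₀ hg₀
  rw [hf.tsum_eq.symm, hg.tsum_eq.symm,
    hf.summable.tsum_mul_tsum_eq_tsum_sum_antidiagonal hg.summable hfg]
  exact (summable_sum_mul_antidiagonal_of_summable_mul hfg).hasSum

lemma H_succ (n m : ℕ) : H (n + 1) m = H n m + 1 / ((n : ℝ) + 1) ^ m := by
  rw [H, H, sum_Icc_succ_top (by omega)]
  push_cast; ring

lemma H_eq_sum_range (n m : ℕ) : H n m = ∑ k ∈ range n, 1 / ((k : ℝ) + 1) ^ m := by
  rw [H, sum_Icc_one_eq_sum_range]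
  push_cast; rfl

lemma tendsto_H {m : ℕ} (hm : m ≠ 0) {L : ℝ} (h : HasSum (fun n : ℕ ↦ 1 / (n : ℝ) ^ m) L) :
    Tendsto (fun n ↦ H n m) atTop (𝓝 L) :=
  h.tendsto_sum_Icc_one (by simp [hm])

lemma hasSum_one_div_add_one_pow {m : ℕ} (hm : m ≠ 0) {L : ℝ}
    (h : HasSum (fun n : ℕ ↦ 1 / (n : ℝ) ^ m) L) :
    HasSum (fun k : ℕ ↦ 1 / ((k : ℝ) + 1) ^ m) L := by
  rw [← hasSum_nat_add_iff' 1] at h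
  simpa [hm] using h

lemma hasSum_zeta_three : HasSum (fun n : ℕ ↦ 1 / (n : ℝ) ^ 3) zeta3 := by
  have hs : Summable (fun n : ℕ ↦ 1 / (n : ℝ) ^ 3) := Real.summable_one_div_nat_pow.mpr (by norm_num)
  rw [← hasSum_nat_add_iff' 1]
  simpa [zeta3] using ((summable_nat_add_iff 1).mpr hs).hasSum

lemma hasSum_zeta_six : HasSum (fun n : ℕ ↦ 1 / (n : ℝ) ^ 6) (π ^ 6 / 945) := by
  convert hasSum_zeta_nat (k := 3) (by norm_num) using 1
  rw [show bernoulli 6 = 1 / 42 by decide +kernel]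
  simp [Nat.factorial]; ring

lemma tendsto_H_two : Tendsto (fun n ↦ H n 2) atTop (𝓝 (π ^ 2 / 6)) :=
  tendsto_H two_ne_zero hasSum_zeta_two

lemma tendsto_H_three : Tendsto (fun n ↦ H n 3) atTop (𝓝 zeta3) :=
  tendsto_H three_ne_zero hasSum_zeta_three

lemma tendsto_H_four : Tendsto (fun n ↦ H n 4) atTop (𝓝 (π ^ 4 / 90)) :=
  tendsto_H four_ne_zero hasSum_zeta_four

lemma tendsto_H_six : Tendsto (fun n ↦ H n 6) atTop (𝓝 (π ^ 6 / 945)) :=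
  tendsto_H (by norm_num) hasSum_zeta_six

lemma sum_sq_H_div_pow (m n : ℕ) :
    ∑ j ∈ Icc 1 n, H j m ^ 2 / (j : ℝ) ^ m =
      1 / 3 * H n m ^ 3 + ∑ j ∈ Icc 1 n, H j m / (j : ℝ) ^ (2 * m) - 1 / 3 * H n (3 * m) := by
  induction n with
  | zero => simp [H]
  | succ n ih =>
    rw [sum_Icc_succ_top (by omega), sum_Icc_succ_top (by omega), ih, H_succ, H_succ]
    push_cast
    field_simp
    ring

/-- The `t`-th term of `ζ(a,b) = ∑_{t>s≥1} 1/(t^a s^b)`; it vanishes at `t = 0`. -/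
noncomputable def doubleZetaTerm (a b t : ℕ) : ℝ := H (t - 1) b / (t : ℝ) ^ a

lemma doubleZetaTerm_nonneg (a b t : ℕ) : 0 ≤ doubleZetaTerm a b t :=
  div_nonneg (sum_nonneg fun _ _ ↦ by positivity) (by positivity)

lemma doubleZetaTerm_zero (a b : ℕ) : doubleZetaTerm a b 0 = 0 := by simp [doubleZetaTerm, H]

lemma doubleZetaTerm_one (a b : ℕ) : doubleZetaTerm a b 1 = 0 := by simp [doubleZetaTerm, H]

lemma doubleZetaTerm_succ (a b n : ℕ) :
    doubleZetaTerm a b (n + 1) = H n b / ((n : ℝ) + 1) ^ a := by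
  simp [doubleZetaTerm]

lemma sum_H_div_pow (a b n : ℕ) :
    ∑ j ∈ Icc 1 n, H j b / (j : ℝ) ^ a = ∑ t ∈ Icc 1 n, doubleZetaTerm a b t + H n (a + b) := by
  induction n with
  | zero => simp [H]
  | succ n ih =>
    rw [sum_Icc_succ_top (by omega), sum_Icc_succ_top (by omega), ih, H_succ, H_succ,
      doubleZetaTerm_succ]
    push_cast
    field_simp
    ring

lemma H_mul_H (a b n : ℕ) :
    H n a * H n b =
      ∑ t ∈ Icc 1 n, (doubleZetaTerm a b t + doubleZetaTerm b a t) + H n (a + b) := by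
  induction n with
  | zero => simp [H]
  | succ n ih =>
    rw [sum_Icc_succ_top (by omega), H_succ, H_succ, H_succ, doubleZetaTerm_succ,
      doubleZetaTerm_succ]
    linear_combination (norm := (field_simp; ring)) ih

-- Iterating `1/(xy) = (1/x + 1/y)/(x+y)`, Euler's partial fraction decomposition.
lemma one_div_pow_three_mul_one_div_pow_three {x y : ℝ} (hx : x ≠ 0) (hy : y ≠ 0)
    (hxy : x + y ≠ 0) :
    1 / x ^ 3 * (1 / y ^ 3) = 1 / (x + y) ^ 3 * (1 / x ^ 3 + 1 / y ^ 3)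
      + 3 / (x + y) ^ 4 * (1 / x ^ 2 + 1 / y ^ 2) + 6 / (x + y) ^ 5 * (1 / x + 1 / y) := by
  field_simp
  ring

lemma one_div_pow_two_mul_one_div_pow_four {x y : ℝ} (hx : x ≠ 0) (hy : y ≠ 0)
    (hxy : x + y ≠ 0) :
    1 / x ^ 2 * (1 / y ^ 4) = 1 / (x + y) ^ 2 * (1 / y ^ 4) + 2 / (x + y) ^ 3 * (1 / y ^ 3)
      + 1 / (x + y) ^ 4 * (1 / x ^ 2) + 3 / (x + y) ^ 4 * (1 / y ^ 2)
      + 4 / (x + y) ^ 5 * (1 / x + 1 / y) := by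
  field_simp
  ring

lemma sum_antidiagonal_one_div_pow_fst (s j : ℕ) :
    ∑ p ∈ antidiagonal s, 1 / ((p.1 : ℝ) + 1) ^ j = H (s + 1) j := by
  rw [Nat.sum_antidiagonal_eq_sum_range_succ_mk, H_eq_sum_range]

lemma sum_antidiagonal_one_div_pow_snd (s j : ℕ) :
    ∑ p ∈ antidiagonal s, 1 / ((p.2 : ℝ) + 1) ^ j = H (s + 1) j := by
  rw [← sum_antidiagonal_one_div_pow_fst, ← Nat.sum_antidiagonal_swap]
  rfl

lemma add_one_add_add_one_of_mem_antidiagonal {s : ℕ} {p : ℕ × ℕ} (hp : p ∈ antidiagonal s) :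
    ((p.1 : ℝ) + 1) + ((p.2 : ℝ) + 1) = ((s + 1 + 1 : ℕ) : ℝ) := by
  rw [Finset.HasAntidiagonal.mem_antidiagonal] at hp
  rw [← hp]; push_cast; ring

lemma sum_antidiagonal_three_three (s : ℕ) :
    ∑ p ∈ antidiagonal s, 1 / ((p.1 : ℝ) + 1) ^ 3 * (1 / ((p.2 : ℝ) + 1) ^ 3) =
      2 * doubleZetaTerm 3 3 (s + 2) + 6 * doubleZetaTerm 4 2 (s + 2)
        + 12 * doubleZetaTerm 5 1 (s + 2) := by
  rw [sum_congr rfl fun p hp ↦ by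
    rw [one_div_pow_three_mul_one_div_pow_three (by positivity) (by positivity) (by positivity),
      add_one_add_add_one_of_mem_antidiagonal hp]]
  have h₁ : ∑ p ∈ antidiagonal s, 1 / ((p.1 : ℝ) + 1) = H (s + 1) 1 := by
    simpa using sum_antidiagonal_one_div_pow_fst s 1
  have h₂ : ∑ p ∈ antidiagonal s, 1 / ((p.2 : ℝ) + 1) = H (s + 1) 1 := by
    simpa using sum_antidiagonal_one_div_pow_snd s 1
  simp only [sum_add_distrib, ← mul_sum, sum_antidiagonal_one_div_pow_fst,
    sum_antidiagonal_one_div_pow_snd, h₁, h₂, doubleZetaTerm_succ]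
  push_cast
  ring

lemma sum_antidiagonal_two_four (s : ℕ) :
    ∑ p ∈ antidiagonal s, 1 / ((p.1 : ℝ) + 1) ^ 2 * (1 / ((p.2 : ℝ) + 1) ^ 4) =
      doubleZetaTerm 2 4 (s + 2) + 2 * doubleZetaTerm 3 3 (s + 2)
        + 4 * doubleZetaTerm 4 2 (s + 2) + 8 * doubleZetaTerm 5 1 (s + 2) := by
  rw [sum_congr rfl fun p hp ↦ by
    rw [one_div_pow_two_mul_one_div_pow_four (by positivity) (by positivity) (by positivity),
      add_one_add_add_one_of_mem_antidiagonal hp]]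
  have h₁ : ∑ p ∈ antidiagonal s, 1 / ((p.1 : ℝ) + 1) = H (s + 1) 1 := by
    simpa using sum_antidiagonal_one_div_pow_fst s 1
  have h₂ : ∑ p ∈ antidiagonal s, 1 / ((p.2 : ℝ) + 1) = H (s + 1) 1 := by
    simpa using sum_antidiagonal_one_div_pow_snd s 1
  simp only [sum_add_distrib, ← mul_sum, sum_antidiagonal_one_div_pow_fst,
    sum_antidiagonal_one_div_pow_snd, h₁, h₂, doubleZetaTerm_succ]
  push_cast
  ring

theorem HasSum.of_add_two {G : Type*} [AddCommGroup G] [TopologicalSpace G]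
    [IsTopologicalAddGroup G] {f : ℕ → G} {L : G} (h0 : f 0 = 0) (h1 : f 1 = 0)
    (h : HasSum (fun s ↦ f (s + 2)) L) : HasSum f L := by
  rw [← hasSum_nat_add_iff' 2]
  simpa [sum_range_succ, h0, h1] using h

lemma hasSum_doubleZetaTerm_shuffle_three_three :
    HasSum (fun t ↦ 2 * doubleZetaTerm 3 3 t + 6 * doubleZetaTerm 4 2 t
      + 12 * doubleZetaTerm 5 1 t) (zeta3 * zeta3) := by
  have h := hasSum_one_div_add_one_pow three_ne_zero hasSum_zeta_three
  refine HasSum.of_add_two (by simp [doubleZetaTerm_zero])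
    (by simp [doubleZetaTerm_one]) ?_
  simpa only [sum_antidiagonal_three_three] using
    h.mul_antidiagonal_of_nonneg h (fun _ ↦ by positivity) (fun _ ↦ by positivity)

lemma hasSum_doubleZetaTerm_shuffle_two_four :
    HasSum (fun t ↦ doubleZetaTerm 2 4 t + 2 * doubleZetaTerm 3 3 t
      + 4 * doubleZetaTerm 4 2 t + 8 * doubleZetaTerm 5 1 t) (π ^ 2 / 6 * (π ^ 4 / 90)) := by
  refine HasSum.of_add_two (by simp [doubleZetaTerm_zero])
    (by simp [doubleZetaTerm_one]) ?_
  simpa only [sum_antidiagonal_two_four] using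
    (hasSum_one_div_add_one_pow two_ne_zero hasSum_zeta_two).mul_antidiagonal_of_nonneg
      (hasSum_one_div_add_one_pow four_ne_zero hasSum_zeta_four)
      (fun _ ↦ by positivity) (fun _ ↦ by positivity)

lemma stuffle_of_hasSum_doubleZetaTerm {a b : ℕ} {A B C Zab Zba : ℝ}
    (hA : Tendsto (fun n ↦ H n a) atTop (𝓝 A)) (hB : Tendsto (fun n ↦ H n b) atTop (𝓝 B))
    (hC : Tendsto (fun n ↦ H n (a + b)) atTop (𝓝 C))
    (hab : HasSum (doubleZetaTerm a b) Zab) (hba : HasSum (doubleZetaTerm b a) Zba) :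
    Zab + Zba = A * B - C := by
  have h := ((hab.add hba).tendsto_sum_Icc_one (by simp [doubleZetaTerm_zero])).add hC
  simp only [← H_mul_H] at h
  linarith [tendsto_nhds_unique (hA.mul hB) h]

lemma hasSum_doubleZetaTerm_four_two :
    HasSum (doubleZetaTerm 4 2) (zeta3 ^ 2 - 4 / 3 * (π ^ 6 / 945)) := by
  have h33 := hasSum_doubleZetaTerm_shuffle_three_three
  have h24 := hasSum_doubleZetaTerm_shuffle_two_four
  have nn := doubleZetaTerm_nonneg
  have s51 : Summable (doubleZetaTerm 5 1) := .of_nonneg_of_le (nn 5 1)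
    (fun t ↦ by linarith [nn 3 3 t, nn 4 2 t, nn 5 1 t]) h33.summable
  have s42 : Summable (doubleZetaTerm 4 2) := .of_nonneg_of_le (nn 4 2)
    (fun t ↦ by linarith [nn 3 3 t, nn 4 2 t, nn 5 1 t]) h33.summable
  have s33 : Summable (doubleZetaTerm 3 3) := .of_nonneg_of_le (nn 3 3)
    (fun t ↦ by linarith [nn 3 3 t, nn 4 2 t, nn 5 1 t]) h33.summable
  have s24 : Summable (doubleZetaTerm 2 4) := .of_nonneg_of_le (nn 2 4)
    (fun t ↦ by linarith [nn 3 3 t, nn 4 2 t, nn 5 1 t, nn 2 4 t]) h24.summable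
  have shuffle₁ := h33.unique <|
    ((s33.hasSum.mul_left 2).add (s42.hasSum.mul_left 6)).add (s51.hasSum.mul_left 12)
  have shuffle₂ := h24.unique <| ((s24.hasSum.add (s33.hasSum.mul_left 2)).add
    (s42.hasSum.mul_left 4)).add (s51.hasSum.mul_left 8)
  have stuffle₁ := stuffle_of_hasSum_doubleZetaTerm tendsto_H_three tendsto_H_three tendsto_H_six
    s33.hasSum s33.hasSum
  have stuffle₂ := stuffle_of_hasSum_doubleZetaTerm tendsto_H_two tendsto_H_four tendsto_H_six
    s24.hasSum s42.hasSum
  convert s42.hasSum using 1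
  linarith

theorem sum_H2_sq_div_sq :
    (∀ n : ℕ, 1 ≤ n →
      ∑ j ∈ Finset.Icc 1 n, (H j 2) ^ 2 / (j : ℝ) ^ 2 =
        (1 / 3) * (H n 2) ^ 3 + (∑ j ∈ Finset.Icc 1 n, H j 2 / (j : ℝ) ^ 4)
          - (1 / 3) * H n 6) ∧
    Tendsto (fun n : ℕ => ∑ j ∈ Finset.Icc 1 n, (H j 2) ^ 2 / (j : ℝ) ^ 2)
      atTop (nhds (zeta3 ^ 2 + 19 * π ^ 6 / 22680)) := by
  refine ⟨fun n _ ↦ sum_sq_H_div_pow 2 n, ?_⟩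
  have hT : Tendsto (fun n ↦ ∑ j ∈ Icc 1 n, H j 2 / (j : ℝ) ^ 4) atTop
      (𝓝 (zeta3 ^ 2 - 4 / 3 * (π ^ 6 / 945) + π ^ 6 / 945)) := by
    simp only [sum_H_div_pow]
    exact (hasSum_doubleZetaTerm_four_two.tendsto_sum_Icc_one (doubleZetaTerm_zero 4 2)).add
      tendsto_H_six
  have hlim := (((tendsto_H_two.pow 3).const_mul (1 / 3)).add hT).sub
    (tendsto_H_six.const_mul (1 / 3))
  simp only [sum_sq_H_div_pow 2]
  convert hlim using 2
  ring
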